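/- In a group with elements a, b, x satisfying [a, b] = e, (bx)² = (xb)², (ax)² = (xa)², and [xbx⁻¹, a] = e, the relation (bax)² = (xba)² holds automatically. -/
import Mathlib


/-- If `a` commutes with `b`, `(bx)² = (xb)²`, `(ax)² = (xa)²`, and `xbx⁻¹` commutes
with `a`, then `(bax)² = (xba)²`. -/
theorem stmt_8 {G : Type*} [Group G] (a b x : G)
    (hab : a * b = b * a)
    (hbx : (b * x) ^ 2 = (x * b) ^ 2)
    (hax : (a * x) ^ 2 = (x * a) ^ 2)
    (hconj : (x * b * x⁻¹) * a = a * (x * b * x⁻¹)) :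
    (b * a * x) ^ 2 = (x * b * a) ^ 2 := by
  have key : a * (x * b) = x * b * x⁻¹ * a * x := by
    rw [hconj]; group
  simp only [pow_two] at hbx hax ⊢
  have h1 : b * a * x * (b * a * x) = b * x * b * (a * x * a) := by
    calc b * a * x * (b * a * x)
        = b * (a * (x * b)) * (a * x) := by group
      _ = b * (x * b * x⁻¹ * a * x) * (a * x) := by rw [key]
      _ = b * x * b * x⁻¹ * (a * x * (a * x)) := by group
      _ = b * x * b * x⁻¹ * (x * a * (x * a)) := by rw [hax]
      _ = b * x * b * (a * x * a) := by group
  have h2 : x * b * a * (x * b * a) = b * x * b * (a * x * a) := by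
    calc x * b * a * (x * b * a)
        = x * b * (a * (x * b)) * a := by group
      _ = x * b * (x * b * x⁻¹ * a * x) * a := by rw [key]
      _ = x * b * (x * b) * (x⁻¹ * a * x * a) := by group
      _ = b * x * (b * x) * (x⁻¹ * a * x * a) := by rw [← hbx]
      _ = b * x * b * (a * x * a) := by group
  exact h1.trans h2.symm
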